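/- arXiv:2007.04202 — 3 statements merged into one kernel-verified Lean document; each statement's English description precedes it below -/
import Mathlib

section
/- Suppose that for each i the map ξ_i is L_i-Lipschitz and its Jacobian J_i is S_i-Lipschitz in the spectral norm (‖J_i(x) − J_i(y)‖ ≤ S_i‖x − y‖ for all x, y), and that there is C > 0 with (1/n)∑_{i=1}^n ‖ξ_i(x)‖ ≤ C for all x ∈ ℝ^d. Then the Hamiltonian H is L_H-smooth with L_H = S̄C + L̄², where S̄ = (1/n)∑_{i=1}^n S_i and L̄ = (1/n)∑_{i=1}^n L_i: that is, ‖∇H(x) − ∇H(y)‖ ≤ (S̄C + L̄²)‖x − y‖ for all x, y ∈ ℝ^d. -/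
/-!
The gradient of `H = ½‖ξ‖²` is `∇H(x) = J(x)ᵀ ξ(x)`. Splitting
`J(x)ᵀ ξ(x) - J(y)ᵀ ξ(y) = (J(x) - J(y))ᵀ ξ(x) + J(y)ᵀ (ξ(x) - ξ(y))`, the first term is at most
`S̄ ‖x - y‖ C` and the second at most `L̄ · L̄ ‖x - y‖`, because an `L̄`-Lipschitz map has
derivative of norm at most `L̄` and taking adjoints preserves operator norms. The averaged field
`ξ` inherits the averaged constants `L̄`, `S̄` from the `ξᵢ` by the triangle inequality.
-/

open scoped RealInnerProductSpace BigOperators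

noncomputable section

/-- The signed gradient field ξ(x) = (∇_{x1} g(x), −∇_{x2} g(x)) of a payoff g. -/
def xi {d1 d2 : ℕ} (g : EuclideanSpace ℝ (Fin d1 ⊕ Fin d2) → ℝ)
    (x : EuclideanSpace ℝ (Fin d1 ⊕ Fin d2)) : EuclideanSpace ℝ (Fin d1 ⊕ Fin d2) :=
  (WithLp.equiv 2 _).symm (Sum.elim
    (fun a => gradient g x (Sum.inl a))
    (fun j => -(gradient g x (Sum.inr j))))

/-- The Hamiltonian H(x) = ½‖(1/n)∑ᵢ ξᵢ(x)‖². -/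
def Ham {n d1 d2 : ℕ} (g : Fin n → EuclideanSpace ℝ (Fin d1 ⊕ Fin d2) → ℝ)
    (x : EuclideanSpace ℝ (Fin d1 ⊕ Fin d2)) : ℝ :=
  (1 / 2 : ℝ) * ‖(n : ℝ)⁻¹ • ∑ i, xi (g i) x‖ ^ 2

open ContinuousLinearMap (adjoint adjoint_inner_left le_opNorm)

section HalfNormSq

variable {E F : Type*} [NormedAddCommGroup E] [InnerProductSpace ℝ E] [CompleteSpace E]
  [NormedAddCommGroup F] [InnerProductSpace ℝ F] [CompleteSpace F]

theorem HasFDerivAt.hasGradientAt_half_norm_sq {f : E → F} {f' : E →L[ℝ] F} {x : E}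
    (hf : HasFDerivAt f f' x) :
    HasGradientAt (fun y => (1 / 2 : ℝ) * ‖f y‖ ^ 2) (adjoint f' (f x)) x := by
  have hdual : InnerProductSpace.toDual ℝ E (adjoint f' (f x))
      = (1 / 2 : ℝ) • (2 • (innerSL ℝ (f x)).comp f') := by
    ext v
    simp [adjoint_inner_left]
  rw [hasGradientAt_iff_hasFDerivAt, hdual]
  exact hf.norm_sq.const_mul _

theorem norm_adjoint_apply_sub_adjoint_apply_le (A B : E →L[ℝ] F) (u v : F) :
    ‖adjoint A u - adjoint B v‖ ≤ ‖A - B‖ * ‖u‖ + ‖B‖ * ‖u - v‖ := by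
  have hsplit : adjoint A u - adjoint B v = adjoint (A - B) u + adjoint B (u - v) := by
    simp only [map_sub, sub_apply]
    abel
  calc ‖adjoint A u - adjoint B v‖
      ≤ ‖adjoint (A - B) u‖ + ‖adjoint B (u - v)‖ := hsplit ▸ norm_add_le _ _
    _ ≤ ‖adjoint (A - B)‖ * ‖u‖ + ‖adjoint B‖ * ‖u - v‖ :=
      add_le_add (le_opNorm _ _) (le_opNorm _ _)
    _ = ‖A - B‖ * ‖u‖ + ‖B‖ * ‖u - v‖ := by rw [adjoint.norm_map, adjoint.norm_map]

theorem norm_gradient_half_norm_sq_sub_le {f : E → F} (hf : Differentiable ℝ f) {L S C : ℝ}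
    (hLip : ∀ x y, ‖f x - f y‖ ≤ L * ‖x - y‖)
    (hJLip : ∀ x y, ‖fderiv ℝ f x - fderiv ℝ f y‖ ≤ S * ‖x - y‖)
    (hC : ∀ x, ‖f x‖ ≤ C) (x y : E) :
    ‖gradient (fun z => (1 / 2 : ℝ) * ‖f z‖ ^ 2) x - gradient (fun z => (1 / 2 : ℝ) * ‖f z‖ ^ 2) y‖
      ≤ (S * C + L ^ 2) * ‖x - y‖ := by
  rcases eq_or_ne x y with rfl | hxy
  · simp
  have hL : 0 ≤ L := nonneg_of_mul_nonneg_left ((norm_nonneg _).trans (hLip x y))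
    (norm_pos_iff.2 (sub_ne_zero.2 hxy))
  have hDf : ‖fderiv ℝ f y‖ ≤ L :=
    norm_fderiv_le_of_lip' ℝ hL (Filter.Eventually.of_forall fun z => hLip z y)
  rw [(hf x).hasFDerivAt.hasGradientAt_half_norm_sq.gradient,
    (hf y).hasFDerivAt.hasGradientAt_half_norm_sq.gradient]
  calc _ ≤ ‖fderiv ℝ f x - fderiv ℝ f y‖ * ‖f x‖ + ‖fderiv ℝ f y‖ * ‖f x - f y‖ :=
        norm_adjoint_apply_sub_adjoint_apply_le _ _ _ _
    _ ≤ (S * ‖x - y‖) * C + L * (L * ‖x - y‖) :=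
        add_le_add
          (mul_le_mul (hJLip x y) (hC x) (norm_nonneg _) ((norm_nonneg _).trans (hJLip x y)))
          (mul_le_mul hDf (hLip x y) (norm_nonneg _) hL)
    _ = (S * C + L ^ 2) * ‖x - y‖ := by ring

end HalfNormSq

theorem norm_smul_sum_sub_smul_sum_le {ι G : Type*} [SeminormedAddCommGroup G] [NormedSpace ℝ G]
    (s : Finset ι) {c : ℝ} (hc : 0 ≤ c) (u v : ι → G) (K : ι → ℝ) (r : ℝ)
    (h : ∀ i ∈ s, ‖u i - v i‖ ≤ K i * r) :
    ‖c • ∑ i ∈ s, u i - c • ∑ i ∈ s, v i‖ ≤ (c * ∑ i ∈ s, K i) * r := by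
  rw [← smul_sub, ← Finset.sum_sub_distrib, norm_smul, Real.norm_of_nonneg hc, mul_assoc,
    Finset.sum_mul]
  exact mul_le_mul_of_nonneg_left ((norm_sum_le _ _).trans (Finset.sum_le_sum h)) hc

theorem ContDiff.differentiable_gradient {E : Type*} [NormedAddCommGroup E]
    [InnerProductSpace ℝ E] [CompleteSpace E] {f : E → ℝ} (hf : ContDiff ℝ 2 f) :
    Differentiable ℝ (gradient f) :=
  (InnerProductSpace.toDual ℝ E).symm.differentiable.comp
    ((hf.fderiv_right (m := 1) le_rfl).differentiable one_ne_zero)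

theorem differentiable_xi {d1 d2 : ℕ} {g : EuclideanSpace ℝ (Fin d1 ⊕ Fin d2) → ℝ}
    (hg : ContDiff ℝ 2 g) : Differentiable ℝ (xi g) := by
  have hgrad := differentiable_euclidean.1 hg.differentiable_gradient
  refine differentiable_euclidean.2 ?_
  rintro (a | j)
  · simpa [xi] using hgrad (Sum.inl a)
  · simpa [xi] using (hgrad (Sum.inr j)).neg

theorem hamiltonian_smoothness_general
    {n d1 d2 : ℕ}
    (g : Fin n → EuclideanSpace ℝ (Fin d1 ⊕ Fin d2) → ℝ)
    (hg : ∀ i, ContDiff ℝ 2 (g i))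
    (L S : Fin n → ℝ) (C : ℝ)
    (hLip : ∀ i x y, ‖xi (g i) x - xi (g i) y‖ ≤ L i * ‖x - y‖)
    (hJLip : ∀ i x y,
      ‖fderiv ℝ (xi (g i)) x - fderiv ℝ (xi (g i)) y‖ ≤ S i * ‖x - y‖)
    (hBound : ∀ x, (n : ℝ)⁻¹ * ∑ i, ‖xi (g i) x‖ ≤ C) :
    ∀ x y, ‖gradient (Ham g) x - gradient (Ham g) y‖
      ≤ (((n : ℝ)⁻¹ * ∑ i, S i) * C + ((n : ℝ)⁻¹ * ∑ i, L i) ^ 2) * ‖x - y‖ := by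
  have hinv : (0 : ℝ) ≤ (n : ℝ)⁻¹ := by positivity
  have hdiff : ∀ i, Differentiable ℝ (xi (g i)) := fun i => differentiable_xi (hg i)
  have hfderiv : ∀ z, fderiv ℝ (fun x => (n : ℝ)⁻¹ • ∑ i, xi (g i) x) z
      = (n : ℝ)⁻¹ • ∑ i, fderiv ℝ (xi (g i)) z := fun z => by
    rw [fderiv_fun_const_smul (by fun_prop), fderiv_fun_sum fun i _ => hdiff i z]
  refine norm_gradient_half_norm_sq_sub_le (by fun_prop)
    (fun x y => norm_smul_sum_sub_smul_sum_le _ hinv _ _ _ _ fun i _ => hLip i x y)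
    (fun x y => ?_) (fun x => ?_)
  · rw [hfderiv, hfderiv]
    exact norm_smul_sum_sub_smul_sum_le _ hinv _ _ _ _ fun i _ => hJLip i x y
  · rw [norm_smul, Real.norm_of_nonneg hinv]
    exact (mul_le_mul_of_nonneg_left (norm_sum_le _ _) hinv).trans (hBound x)

theorem hamiltonian_smoothness
    {n d1 d2 : ℕ} (hn : 0 < n)
    (g : Fin n → EuclideanSpace ℝ (Fin d1 ⊕ Fin d2) → ℝ)
    (hg : ∀ i, ContDiff ℝ 2 (g i))
    (L S : Fin n → ℝ) (C : ℝ) (hC : 0 < C)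
    (hLip : ∀ i x y, ‖xi (g i) x - xi (g i) y‖ ≤ L i * ‖x - y‖)
    (hJLip : ∀ i x y,
      ‖fderiv ℝ (xi (g i)) x - fderiv ℝ (xi (g i)) y‖ ≤ S i * ‖x - y‖)
    (hBound : ∀ x, (n : ℝ)⁻¹ * ∑ i, ‖xi (g i) x‖ ≤ C) :
    ∀ x y, ‖gradient (Ham g) x - gradient (Ham g) y‖
      ≤ (((n : ℝ)⁻¹ * ∑ i, S i) * C + ((n : ℝ)⁻¹ * ∑ i, L i) ^ 2) * ‖x - y‖ :=
  hamiltonian_smoothness_general g hg L S C hLip hJLip hBound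
end
end

section
/- Let z : ℝ^m → ℝ be differentiable, μ_z-strongly convex, and have an L_z-Lipschitz gradient, and let A ∈ ℝ^{m×n} be a nonzero matrix. Then the function f : ℝ^n → ℝ, f(x) = z(Ax), attains its minimum on a nonempty closed convex set X*, f is L-smooth with L = L_z‖A‖² (where ‖A‖ is the spectral norm), and f is μ-quasi-strongly convex with μ = μ_z σ_min(A)², where σ_min(A) is the smallest nonzero singular value of A: for every x ∈ ℝ^n, writing x̄ for the orthogonal projection of x onto X*, one has f(x̄) ≥ f(x) + ⟨∇f(x), x̄ − x⟩ + (μ/2)‖x̄ − x‖². -/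
/-!
Write `f = z ∘ T` with `T` the linear map of `A`. The chain rule gives `∇f x = Tᵀ ∇z (T x)`,
whence the smoothness bound, and the strong convexity inequality of `z` between `T x` and `T y`
becomes a first-order bound for `f` whose quadratic term is `μ_z/2 ‖T (y - x)‖²`. Since `z` is
coercive on the finite-dimensional range of `T`, `f` has a minimiser, and as `f` is convex, `X*`
is a closed convex sublevel set. Because `f` is invariant under translation by `ker T`, so is
`X*`; hence the projection `x̄` of `x` onto `X*` satisfies `x̄ - x ⊥ ker T`, and on `(ker T)ᗮ`
the spectral decomposition of `TᵀT` gives `‖T v‖² ≥ σ_min(A)² ‖v‖²`.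
-/

open scoped RealInnerProductSpace

noncomputable section

/-- Spectral norm of a matrix: the operator norm of the induced map between
Euclidean spaces. -/
def specNorm {m n : ℕ} (A : Matrix (Fin m) (Fin n) ℝ) : ℝ :=
  ‖LinearMap.toContinuousLinearMap (Matrix.toEuclideanLin A)‖

/-- Squared smallest nonzero singular value of A, i.e. the smallest nonzero
eigenvalue of Aᵀ A. -/
def sigmaMinSq {m n : ℕ} (A : Matrix (Fin m) (Fin n) ℝ) : ℝ :=
  sInf {t : ℝ | t ≠ 0 ∧ ∃ v : Fin n → ℝ, v ≠ 0 ∧ (A.transpose * A).mulVec v = t • v}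

end

open Filter Module.End
open scoped Matrix

section Composition

variable {E F : Type*} [NormedAddCommGroup E] [InnerProductSpace ℝ E] [CompleteSpace E]
  [NormedAddCommGroup F] [InnerProductSpace ℝ F] [CompleteSpace F] {z : F → ℝ} (T : E →L[ℝ] F)

theorem HasGradientAt.comp_continuousLinearMap {g : F} {x : E} (hz : HasGradientAt z g (T x)) :
    HasGradientAt (fun x => z (T x)) (T.adjoint g) x := by
  rw [hasGradientAt_iff_hasFDerivAt] at hz ⊢
  have hdual : InnerProductSpace.toDual ℝ E (T.adjoint g) =
      (InnerProductSpace.toDual ℝ F g).comp T := by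
    ext v
    simp [ContinuousLinearMap.adjoint_inner_left]
  rw [hdual]
  exact hz.comp x T.hasFDerivAt

theorem gradient_comp_continuousLinearMap {x : E} (hz : DifferentiableAt ℝ z (T x)) :
    gradient (fun x => z (T x)) x = T.adjoint (gradient z (T x)) :=
  (hz.hasGradientAt.comp_continuousLinearMap T).gradient

theorem norm_gradient_comp_continuousLinearMap_sub_le (hz : Differentiable ℝ z) {L : ℝ}
    (hL : 0 ≤ L) (hlip : ∀ u w, ‖gradient z u - gradient z w‖ ≤ L * ‖u - w‖) (x y : E) :
    ‖gradient (fun x => z (T x)) x - gradient (fun x => z (T x)) y‖ ≤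
      L * ‖T‖ ^ 2 * ‖x - y‖ := by
  rw [gradient_comp_continuousLinearMap T (hz _), gradient_comp_continuousLinearMap T (hz _),
    ← map_sub]
  calc ‖T.adjoint (gradient z (T x) - gradient z (T y))‖
      ≤ ‖T‖ * ‖gradient z (T x) - gradient z (T y)‖ := by
        simpa only [LinearIsometryEquiv.norm_map] using T.adjoint.le_opNorm _
    _ ≤ ‖T‖ * (L * ‖T (x - y)‖) := by
        rw [map_sub]; gcongr; exact hlip _ _
    _ ≤ ‖T‖ * (L * (‖T‖ * ‖x - y‖)) := by gcongr; exact T.le_opNorm _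
    _ = L * ‖T‖ ^ 2 * ‖x - y‖ := by ring

theorem add_inner_gradient_comp_continuousLinearMap_le (hz : Differentiable ℝ z) {μ : ℝ}
    (hsc : ∀ u w, z u + ⟪gradient z u, w - u⟫ + μ / 2 * ‖w - u‖ ^ 2 ≤ z w) (x y : E) :
    z (T x) + ⟪gradient (fun x => z (T x)) x, y - x⟫ + μ / 2 * ‖T (y - x)‖ ^ 2 ≤ z (T y) := by
  rw [gradient_comp_continuousLinearMap T (hz _), ContinuousLinearMap.adjoint_inner_left, map_sub]
  exact hsc _ _

end Composition

theorem convexOn_univ_of_add_inner_le {E : Type*} [NormedAddCommGroup E] [InnerProductSpace ℝ E]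
    {φ : E → ℝ} (g : E → E) (h : ∀ x y, φ x + ⟪g x, y - x⟫ ≤ φ y) : ConvexOn ℝ Set.univ φ := by
  refine ⟨convex_univ, fun x _ y _ a b ha hb hab => ?_⟩
  set p := a • x + b • y
  have hcenter : a • (x - p) + b • (y - p) = 0 := by
    rw [smul_sub, smul_sub, sub_add_sub_comm, ← add_smul, hab, one_smul, sub_self]
  have hinner : a * ⟪g p, x - p⟫ + b * ⟪g p, y - p⟫ = 0 := by
    rw [← real_inner_smul_right, ← real_inner_smul_right, ← inner_add_right, hcenter,
      inner_zero_right]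
  have hx := mul_le_mul_of_nonneg_left (h p x) ha
  have hy := mul_le_mul_of_nonneg_left (h p y) hb
  have hsplit : φ p = a * φ p + b * φ p := by rw [← add_mul, hab, one_mul]
  simp only [smul_eq_mul]
  linarith

theorem setOf_forall_le_eq_setOf_le {α β : Type*} [Preorder β] {f : α → β} {x₀ : α}
    (hx₀ : ∀ y, f x₀ ≤ f y) : {x | ∀ y, f x ≤ f y} = {x | f x ≤ f x₀} :=
  Set.ext fun _ => ⟨fun h => h x₀, fun h y => h.trans (hx₀ y)⟩

theorem Continuous.exists_forall_le_of_quadratic_lower_bound {V : Type*} [NormedAddCommGroup V]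
    [NormedSpace ℝ V] [ProperSpace V] {φ : V → ℝ} (hφ : Continuous φ) {a b c : ℝ} (ha : 0 < a)
    (h : ∀ v, c - b * ‖v‖ + a * ‖v‖ ^ 2 ≤ φ v) : ∃ v, ∀ w, φ v ≤ φ w := by
  have hquad : Tendsto (fun r : ℝ => c - b * r + a * r ^ 2) atTop atTop := by
    have : Tendsto (fun r : ℝ => r * (a * r - b)) atTop atTop :=
      tendsto_id.atTop_mul_atTop₀
        (tendsto_atTop_add_const_right _ _ (tendsto_id.const_mul_atTop ha))
    exact (tendsto_atTop_add_const_left _ c this).congr fun r => by ring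
  exact hφ.exists_forall_le (tendsto_atTop_mono h (hquad.comp tendsto_norm_cocompact_atTop))

theorem ContinuousLinearMap.exists_forall_le_comp {E F : Type*} [NormedAddCommGroup E]
    [NormedSpace ℝ E] [NormedAddCommGroup F] [InnerProductSpace ℝ F] [FiniteDimensional ℝ F]
    (T : E →L[ℝ] F) {z : F → ℝ} (hz : Continuous z) {g : F} {μ : ℝ} (hμ : 0 < μ)
    (hlow : ∀ w, z 0 + ⟪g, w⟫ + μ / 2 * ‖w‖ ^ 2 ≤ z w) : ∃ x₀, ∀ x, z (T x₀) ≤ z (T x) := by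
  have hrange : ∀ w : LinearMap.range (T : E →ₗ[ℝ] F),
      z 0 - ‖g‖ * ‖w‖ + μ / 2 * ‖w‖ ^ 2 ≤ z w := fun w => by
    have := neg_le_of_abs_le (abs_real_inner_le_norm g (w : F))
    have := hlow (w : F)
    rw [Submodule.coe_norm]
    linarith
  obtain ⟨⟨_, x₀, rfl⟩, hmin⟩ :=
    (hz.comp continuous_subtype_val).exists_forall_le_of_quadratic_lower_bound (half_pos hμ) hrange
  exact ⟨x₀, fun x => hmin ⟨T x, LinearMap.mem_range_self (T : E →ₗ[ℝ] F) x⟩⟩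

theorem Submodule.mem_orthogonal_of_forall_norm_le_norm_sub {E : Type*} [NormedAddCommGroup E]
    [InnerProductSpace ℝ E] (K : Submodule ℝ E) {u : E} (h : ∀ w ∈ K, ‖u‖ ≤ ‖u - w‖) :
    u ∈ Kᗮ := by
  have hmin : ‖u - 0‖ = ⨅ w : (K : Set E), ‖u - w‖ := by
    refine le_antisymm (le_ciInf fun w => by simpa using h w w.2) ?_
    have hbdd : BddBelow (Set.range fun w : (K : Set E) => ‖u - w‖) :=
      ⟨0, Set.forall_mem_range.2 fun _ => norm_nonneg _⟩
    simpa using ciInf_le hbdd ⟨0, K.zero_mem⟩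
  rw [Submodule.mem_orthogonal']
  simpa using (norm_eq_iInf_iff_real_inner_eq_zero K K.zero_mem).mp hmin

theorem sub_mem_orthogonal_of_isNearest {E : Type*} [NormedAddCommGroup E]
    [InnerProductSpace ℝ E] {K : Submodule ℝ E} {S : Set E} (hS : ∀ s ∈ S, ∀ w ∈ K, s + w ∈ S)
    {x y : E} (hy : y ∈ S) (hnear : ∀ s ∈ S, ‖x - y‖ ≤ ‖x - s‖) : x - y ∈ Kᗮ :=
  K.mem_orthogonal_of_forall_norm_le_norm_sub fun w hw => by
    simpa [sub_sub] using hnear _ (hS y hy w hw)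

theorem LinearMap.IsSymmetric.mul_norm_sq_le_inner_self_of_mem_orthogonal_ker
    {E : Type*} [NormedAddCommGroup E] [InnerProductSpace ℝ E] [FiniteDimensional ℝ E]
    {T : E →ₗ[ℝ] E} (hT : T.IsSymmetric) {c : ℝ}
    (hc : ∀ μ, μ ≠ 0 → HasEigenvalue T μ → c ≤ μ) {v : E} (hv : v ∈ (LinearMap.ker T)ᗮ) :
    c * ‖v‖ ^ 2 ≤ ⟪T v, v⟫ := by
  set b := hT.eigenvectorBasis rfl
  set ev := hT.eigenvalues rfl
  have hcoord : ∀ i, c * b.repr v i ^ 2 ≤ ev i * b.repr v i ^ 2 := by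
    intro i
    by_cases hi : ev i = 0
    · have hker : b i ∈ LinearMap.ker T := by simp [b, ev, hi]
      have hvi : b.repr v i = 0 := by
        rw [b.repr_apply_apply]
        exact Submodule.inner_right_of_mem_orthogonal hker hv
      simp [hvi]
    · exact mul_le_mul_of_nonneg_right (hc _ hi (hT.hasEigenvalue_eigenvalues rfl i))
        (sq_nonneg _)
  calc c * ‖v‖ ^ 2 = ∑ i, c * b.repr v i ^ 2 := by
        rw [← b.repr.norm_map, EuclideanSpace.norm_sq_eq, Finset.mul_sum]
        simp
    _ ≤ ∑ i, ev i * b.repr v i ^ 2 := Finset.sum_le_sum fun i _ => hcoord i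
    _ = ⟪T v, v⟫ := by
        rw [← b.repr.inner_map_map, PiLp.inner_apply]
        refine Finset.sum_congr rfl fun i _ => ?_
        rw [hT.eigenvectorBasis_apply_self_apply]
        simp only [RCLike.inner_apply, conj_trivial, RCLike.ofReal_real_eq_id, id_eq, b, ev]
        ring

theorem LinearMap.mul_norm_sq_le_norm_apply_sq_of_mem_orthogonal_ker
    {E F : Type*} [NormedAddCommGroup E] [InnerProductSpace ℝ E] [FiniteDimensional ℝ E]
    [NormedAddCommGroup F] [InnerProductSpace ℝ F] [FiniteDimensional ℝ F]
    (S : E →ₗ[ℝ] F) {c : ℝ} (hc : ∀ μ, μ ≠ 0 → HasEigenvalue (S.adjoint ∘ₗ S) μ → c ≤ μ)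
    {v : E} (hv : v ∈ (LinearMap.ker S)ᗮ) :
    c * ‖v‖ ^ 2 ≤ ‖S v‖ ^ 2 := by
  have h := S.isPositive_adjoint_comp_self.isSymmetric
    |>.mul_norm_sq_le_inner_self_of_mem_orthogonal_ker hc (by rwa [S.ker_adjoint_comp_self])
  rwa [LinearMap.comp_apply, LinearMap.adjoint_inner_left, real_inner_self_eq_norm_sq] at h

theorem Matrix.toEuclideanLin_transpose_mul_self {m n : Type*} [Fintype m] [DecidableEq m]
    [Fintype n] [DecidableEq n] (A : Matrix m n ℝ) :
    toEuclideanLin (Aᵀ * A) = (toEuclideanLin A).adjoint ∘ₗ toEuclideanLin A := by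
  rw [← conjTranspose_eq_transpose_of_trivial, ← toEuclideanLin_conjTranspose_eq_adjoint]
  exact toLpLin_mul_same _ _ _

theorem sigmaMinSq_le_of_hasEigenvalue {m n : ℕ} {A : Matrix (Fin m) (Fin n) ℝ} {μ : ℝ}
    (hμ0 : μ ≠ 0)
    (hμ : HasEigenvalue ((Matrix.toEuclideanLin A).adjoint ∘ₗ Matrix.toEuclideanLin A) μ) :
    sigmaMinSq A ≤ μ := by
  rw [← Matrix.toEuclideanLin_transpose_mul_self] at hμ
  have hpos : (Matrix.toEuclideanLin (Aᵀ * A)).IsPositive := by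
    rw [Matrix.toEuclideanLin_transpose_mul_self]
    exact (Matrix.toEuclideanLin A).isPositive_adjoint_comp_self
  have hbdd : BddBelow {t : ℝ | t ≠ 0 ∧ ∃ v : Fin n → ℝ, v ≠ 0 ∧ (Aᵀ * A) *ᵥ v = t • v} := by
    refine ⟨0, fun t ⟨_, v, hv0, hv⟩ =>
      eigenvalue_nonneg_of_nonneg ?_ hpos.re_inner_nonneg_right⟩
    refine hasEigenvalue_of_hasEigenvector (x := WithLp.toLp 2 v)
      ⟨mem_eigenspace_iff.mpr ?_, ?_⟩
    · simp [hv]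
    · simpa using hv0
  obtain ⟨v, hv, hv0⟩ := hμ.exists_hasEigenvector
  exact csInf_le hbdd
    ⟨hμ0, WithLp.ofLp v, by simpa using hv0, congrArg WithLp.ofLp (mem_eigenspace_iff.mp hv)⟩

theorem sigmaMinSq_mul_norm_sq_le {m n : ℕ} (A : Matrix (Fin m) (Fin n) ℝ)
    {v : EuclideanSpace ℝ (Fin n)} (hv : v ∈ (LinearMap.ker (Matrix.toEuclideanLin A))ᗮ) :
    sigmaMinSq A * ‖v‖ ^ 2 ≤ ‖Matrix.toEuclideanLin A v‖ ^ 2 :=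
  (Matrix.toEuclideanLin A).mul_norm_sq_le_norm_apply_sq_of_mem_orthogonal_ker
    (fun _ hμ0 hμ => sigmaMinSq_le_of_hasEigenvalue hμ0 hμ) hv

theorem quasi_strong_convexity_of_composition_general
    {m n : ℕ} (z : EuclideanSpace ℝ (Fin m) → ℝ)
    (hzdiff : Differentiable ℝ z)
    (μz Lz : ℝ) (hμz : 0 < μz) (hLz : 0 < Lz)
    (hzsc : ∀ x y, z x + ⟪gradient z x, y - x⟫ + μz / 2 * ‖y - x‖ ^ 2 ≤ z y)
    (hzlip : ∀ x y, ‖gradient z x - gradient z y‖ ≤ Lz * ‖x - y‖)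
    (A : Matrix (Fin m) (Fin n) ℝ)
    (f : EuclideanSpace ℝ (Fin n) → ℝ)
    (hf : f = fun x => z (Matrix.toEuclideanLin A x))
    (Xstar : Set (EuclideanSpace ℝ (Fin n)))
    (hXstar : Xstar = {x | ∀ y, f x ≤ f y}) :
    Xstar.Nonempty ∧ IsClosed Xstar ∧ Convex ℝ Xstar ∧
    (∀ x y, ‖gradient f x - gradient f y‖ ≤ Lz * specNorm A ^ 2 * ‖x - y‖) ∧
    (∀ x xbar, xbar ∈ Xstar → (∀ y ∈ Xstar, ‖x - xbar‖ ≤ ‖x - y‖) →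
      f x + ⟪gradient f x, xbar - x⟫ + μz * sigmaMinSq A / 2 * ‖xbar - x‖ ^ 2
        ≤ f xbar) := by
  set T := LinearMap.toContinuousLinearMap (Matrix.toEuclideanLin A)
  obtain rfl : f = fun x => z (T x) := hf
  have hfirst := add_inner_gradient_comp_continuousLinearMap_le T hzdiff hzsc
  have hconvex : ConvexOn ℝ Set.univ fun x => z (T x) :=
    convexOn_univ_of_add_inner_le _ fun x y =>
      (le_add_of_nonneg_right (by positivity)).trans (hfirst x y)
  obtain ⟨x₀, hx₀⟩ := T.exists_forall_le_comp hzdiff.continuous hμz fun w => by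
    simpa only [sub_zero] using hzsc 0 w
  rw [setOf_forall_le_eq_setOf_le hx₀] at hXstar
  subst hXstar
  refine ⟨⟨x₀, le_refl (z (T x₀))⟩, isClosed_le (hzdiff.continuous.comp T.continuous)
    continuous_const, by simpa using hconvex.convex_le (z (T x₀)),
    norm_gradient_comp_continuousLinearMap_sub_le T hzdiff hLz.le hzlip,
    fun x xbar hxbar hnear => ?_⟩
  have horth : xbar - x ∈ (LinearMap.ker (Matrix.toEuclideanLin A))ᗮ := by
    rw [← neg_sub]
    refine Submodule.neg_mem _ (sub_mem_orthogonal_of_isNearest (fun s hs w hw => ?_) hxbar hnear)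
    simpa [T, LinearMap.mem_ker.mp hw] using hs
  have hσ : sigmaMinSq A * ‖xbar - x‖ ^ 2 ≤ ‖T (xbar - x)‖ ^ 2 :=
    sigmaMinSq_mul_norm_sq_le A horth
  linarith [hfirst x xbar, mul_le_mul_of_nonneg_left hσ (half_pos hμz).le]

theorem quasi_strong_convexity_of_composition
    {m n : ℕ} (z : EuclideanSpace ℝ (Fin m) → ℝ)
    (hzdiff : Differentiable ℝ z)
    (μz Lz : ℝ) (hμz : 0 < μz) (hLz : 0 < Lz)
    (hzsc : ∀ x y, z x + ⟪gradient z x, y - x⟫ + μz / 2 * ‖y - x‖ ^ 2 ≤ z y)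
    (hzlip : ∀ x y, ‖gradient z x - gradient z y‖ ≤ Lz * ‖x - y‖)
    (A : Matrix (Fin m) (Fin n) ℝ) (hA : A ≠ 0)
    (f : EuclideanSpace ℝ (Fin n) → ℝ)
    (hf : f = fun x => z (Matrix.toEuclideanLin A x))
    (Xstar : Set (EuclideanSpace ℝ (Fin n)))
    (hXstar : Xstar = {x | ∀ y, f x ≤ f y}) :
    Xstar.Nonempty ∧ IsClosed Xstar ∧ Convex ℝ Xstar ∧
    (∀ x y, ‖gradient f x - gradient f y‖ ≤ Lz * specNorm A ^ 2 * ‖x - y‖) ∧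
    (∀ x xbar, xbar ∈ Xstar → (∀ y ∈ Xstar, ‖x - xbar‖ ≤ ‖x - y‖) →
      f x + ⟪gradient f x, xbar - x⟫ + μz * sigmaMinSq A / 2 * ‖xbar - x‖ ^ 2
        ≤ f xbar) :=
  quasi_strong_convexity_of_composition_general z hzdiff μz Lz hμz hLz hzsc hzlip A f hf Xstar
    hXstar
end

section
/- Let f = (1/N)∑_{m=1}^N f_m with each f_m : ℝ^d → ℝ differentiable, and let x* be a minimizer of f (so ∇f(x*) = 0). If the expected residual condition holds with constant ρ > 0, i.e. (1/N)∑_{m=1}^N ‖∇f_m(x) − ∇f_m(x*) − (∇f(x) − ∇f(x*))‖² ≤ 2ρ(f(x) − f(x*)) for all x ∈ ℝ^d, then for all x ∈ ℝ^d, (1/N)∑_{m=1}^N ‖∇f_m(x)‖² ≤ 4ρ(f(x) − f(x*)) + ‖∇f(x)‖² + 2σ², where σ² = (1/N)∑_{m=1}^N ‖∇f_m(x*)‖². -/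
/-!
The gradients ∇f_m(x) have mean g = ∇f(x), so their second moment is their variance plus ‖g‖².
Since ∇f(x*) = 0, each centred gradient ∇f_m(x) − g is the residual ∇f_m(x) − ∇f_m(x*) − g
plus ∇f_m(x*), and ‖u + v‖² ≤ 2‖u‖² + 2‖v‖² bounds the variance by twice the expected
residual, hence by 4ρ(f(x) − f(x*)), plus 2σ².
-/

open scoped RealInnerProductSpace BigOperators

noncomputable section

/-- The average f = (1/N) ∑ₘ fₘ. -/
def favg {N d : ℕ} (f : Fin N → EuclideanSpace ℝ (Fin d) → ℝ)
    (x : EuclideanSpace ℝ (Fin d)) : ℝ :=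
  (N : ℝ)⁻¹ * ∑ m, f m x

theorem IsLocalMin.gradient_eq_zero {F : Type*} [NormedAddCommGroup F] [InnerProductSpace ℝ F]
    [CompleteSpace F] {f : F → ℝ} {a : F} (h : IsLocalMin f a) : gradient f a = 0 := by
  simp [gradient, h.fderiv_eq_zero]

theorem Finset.sum_norm_add_sq_le {ι E : Type*} [SeminormedAddGroup E] (s : Finset ι)
    (u v : ι → E) :
    ∑ i ∈ s, ‖u i + v i‖ ^ 2 ≤ 2 * ∑ i ∈ s, ‖u i‖ ^ 2 + 2 * ∑ i ∈ s, ‖v i‖ ^ 2 := by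
  rw [Finset.mul_sum, Finset.mul_sum, ← Finset.sum_add_distrib]
  gcongr with i
  calc ‖u i + v i‖ ^ 2 ≤ (‖u i‖ + ‖v i‖) ^ 2 := by gcongr; exact norm_add_le _ _
    _ ≤ 2 * (‖u i‖ ^ 2 + ‖v i‖ ^ 2) := add_sq_le
    _ = _ := by ring

theorem inv_card_mul_sum_norm_sq_eq {ι E : Type*} [Fintype ι] [NormedAddCommGroup E]
    [InnerProductSpace ℝ E] (a : ι → E) :
    (Fintype.card ι : ℝ)⁻¹ * ∑ i, ‖a i‖ ^ 2
      = (Fintype.card ι : ℝ)⁻¹ * ∑ i, ‖a i - (Fintype.card ι : ℝ)⁻¹ • ∑ j, a j‖ ^ 2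
        + ‖(Fintype.card ι : ℝ)⁻¹ • ∑ j, a j‖ ^ 2 := by
  rcases isEmpty_or_nonempty ι with hι | hι
  · simp
  set n : ℝ := (Fintype.card ι : ℝ)
  set mean := n⁻¹ • ∑ j, a j
  have hn : n ≠ 0 := by positivity
  have hcentered : ∑ i, (a i - mean) = 0 := by
    rw [Finset.sum_sub_distrib, Finset.sum_const, Finset.card_univ, ← Nat.cast_smul_eq_nsmul ℝ,
      smul_smul, mul_inv_cancel₀ hn, one_smul, sub_self]
  have hsum : ∑ i, ‖a i‖ ^ 2 = ∑ i, ‖a i - mean‖ ^ 2 + n * ‖mean‖ ^ 2 := by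
    calc ∑ i, ‖a i‖ ^ 2 = ∑ i, (‖a i - mean‖ ^ 2 + 2 * ⟪a i - mean, mean⟫ + ‖mean‖ ^ 2) := by
          simp only [← norm_add_sq_real, sub_add_cancel]
      _ = ∑ i, ‖a i - mean‖ ^ 2 + 2 * ⟪∑ i, (a i - mean), mean⟫ + n * ‖mean‖ ^ 2 := by
          rw [Finset.sum_add_distrib, Finset.sum_add_distrib, ← Finset.mul_sum, sum_inner,
            Finset.sum_const, Finset.card_univ, nsmul_eq_mul]
      _ = ∑ i, ‖a i - mean‖ ^ 2 + n * ‖mean‖ ^ 2 := by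
          rw [hcentered, inner_zero_left, mul_zero, add_zero]
  rw [hsum, mul_add, inv_mul_cancel_left₀ hn]

theorem hasGradientAt_favg {N d : ℕ} {f : Fin N → EuclideanSpace ℝ (Fin d) → ℝ}
    {x : EuclideanSpace ℝ (Fin d)} (hf : ∀ m, DifferentiableAt ℝ (f m) x) :
    HasGradientAt (favg f) ((N : ℝ)⁻¹ • ∑ m, gradient (f m) x) x := by
  rw [hasGradientAt_iff_hasFDerivAt, map_smul, map_sum]
  simp only [toDual_gradient]
  exact (HasFDerivAt.fun_sum fun m _ => (hf m).hasFDerivAt).const_mul _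

theorem gradient_bound_of_expected_residual_general
    {N d : ℕ} (f : Fin N → EuclideanSpace ℝ (Fin d) → ℝ)
    (hdiff : ∀ m, Differentiable ℝ (f m))
    (xstar : EuclideanSpace ℝ (Fin d)) (hmin : ∀ y, favg f xstar ≤ favg f y)
    (ρ : ℝ)
    (hER : ∀ x, (N : ℝ)⁻¹ * ∑ m,
        ‖gradient (f m) x - gradient (f m) xstar
          - (gradient (favg f) x - gradient (favg f) xstar)‖ ^ 2
      ≤ 2 * ρ * (favg f x - favg f xstar)) :
    ∀ x, (N : ℝ)⁻¹ * ∑ m, ‖gradient (f m) x‖ ^ 2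
      ≤ 4 * ρ * (favg f x - favg f xstar) + ‖gradient (favg f) x‖ ^ 2
        + 2 * ((N : ℝ)⁻¹ * ∑ m, ‖gradient (f m) xstar‖ ^ 2) := by
  intro x
  set g := gradient (favg f) x
  have hg : g = (N : ℝ)⁻¹ • ∑ m, gradient (f m) x :=
    (hasGradientAt_favg fun m => (hdiff m) x).gradient
  have hcrit : gradient (favg f) xstar = 0 :=
    IsLocalMin.gradient_eq_zero (Filter.Eventually.of_forall hmin)
  have hres := hER x
  rw [hcrit, sub_zero] at hres
  have hvar := inv_card_mul_sum_norm_sq_eq fun m => gradient (f m) x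
  rw [Fintype.card_fin, ← hg] at hvar
  calc (N : ℝ)⁻¹ * ∑ m, ‖gradient (f m) x‖ ^ 2
      = (N : ℝ)⁻¹ * ∑ m, ‖(gradient (f m) x - gradient (f m) xstar - g) + gradient (f m) xstar‖ ^ 2
        + ‖g‖ ^ 2 := by simp only [hvar, sub_right_comm _ _ g, sub_add_cancel]
    _ ≤ (N : ℝ)⁻¹ * (2 * ∑ m, ‖gradient (f m) x - gradient (f m) xstar - g‖ ^ 2
          + 2 * ∑ m, ‖gradient (f m) xstar‖ ^ 2) + ‖g‖ ^ 2 := by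
        gcongr; exact Finset.sum_norm_add_sq_le _ _ _
    _ = 2 * ((N : ℝ)⁻¹ * ∑ m, ‖gradient (f m) x - gradient (f m) xstar - g‖ ^ 2) + ‖g‖ ^ 2
          + 2 * ((N : ℝ)⁻¹ * ∑ m, ‖gradient (f m) xstar‖ ^ 2) := by ring
    _ ≤ _ := by linarith

theorem gradient_bound_of_expected_residual
    {N d : ℕ} (hN : 0 < N) (f : Fin N → EuclideanSpace ℝ (Fin d) → ℝ)
    (hdiff : ∀ m, Differentiable ℝ (f m))
    (xstar : EuclideanSpace ℝ (Fin d)) (hmin : ∀ y, favg f xstar ≤ favg f y)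
    (ρ : ℝ) (hρ : 0 < ρ)
    (hER : ∀ x, (N : ℝ)⁻¹ * ∑ m,
        ‖gradient (f m) x - gradient (f m) xstar
          - (gradient (favg f) x - gradient (favg f) xstar)‖ ^ 2
      ≤ 2 * ρ * (favg f x - favg f xstar)) :
    ∀ x, (N : ℝ)⁻¹ * ∑ m, ‖gradient (f m) x‖ ^ 2
      ≤ 4 * ρ * (favg f x - favg f xstar) + ‖gradient (favg f) x‖ ^ 2
        + 2 * ((N : ℝ)⁻¹ * ∑ m, ‖gradient (f m) xstar‖ ^ 2) :=
  gradient_bound_of_expected_residual_general f hdiff xstar hmin ρ hER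
end
end
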